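/- Every potentially mnl 0-1 matrix with 2 rows has at most 4 ones; more generally, for every k >= 2, every potentially mnl 0-1 matrix with k rows has at most 4k - 4 ones. -/
import Mathlib


open Matrix Finset

/-- `P` is contained in `M`: some submatrix of `M` (rows/columns chosen in order)
has ones wherever `P` has ones. -/
def ContainedIn {a b m n : ℕ} (P : Matrix (Fin a) (Fin b) Bool)
    (M : Matrix (Fin m) (Fin n) Bool) : Prop :=
  ∃ f : Fin a → Fin m, ∃ g : Fin b → Fin n,
    StrictMono f ∧ StrictMono g ∧ ∀ i j, P i j = true → M (f i) (g j) = true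

def Avoids {a b m n : ℕ} (M : Matrix (Fin m) (Fin n) Bool)
    (P : Matrix (Fin a) (Fin b) Bool) : Prop :=
  ¬ ContainedIn P M

noncomputable def onesCount {m n : ℕ} (M : Matrix (Fin m) (Fin n) Bool) : ℕ :=
  (Finset.univ.filter (fun p : Fin m × Fin n => M p.1 p.2 = true)).card

open Classical in
/-- `exPat n P` is the maximum number of ones in an `n × n` 0-1 matrix avoiding `P`. -/
noncomputable def exPat {a b : ℕ} (n : ℕ) (P : Matrix (Fin a) (Fin b) Bool) : ℕ :=
  Finset.sup (Finset.univ.filter (fun M : Matrix (Fin n) (Fin n) Bool => Avoids M P)) onesCount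

def LinearEx {a b : ℕ} (P : Matrix (Fin a) (Fin b) Bool) : Prop :=
  ∃ C : ℕ, ∀ n : ℕ, exPat n P ≤ C * n

/-- `P` is minimally non-linear: `exPat n P` is not `O(n)` but every pattern properly
contained in `P` has a linear extremal function. -/
def MinNonLinear {a b : ℕ} (P : Matrix (Fin a) (Fin b) Bool) : Prop :=
  ¬ LinearEx P ∧
    ∀ (a' b' : ℕ) (P' : Matrix (Fin a') (Fin b') Bool),
      ContainedIn P' P → ¬ ContainedIn P P' → LinearEx P'

def rowRefl {m n : ℕ} (M : Matrix (Fin m) (Fin n) Bool) : Matrix (Fin m) (Fin n) Bool :=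
  fun i j => M i.rev j

def colRefl {m n : ℕ} (M : Matrix (Fin m) (Fin n) Bool) : Matrix (Fin m) (Fin n) Bool :=
  fun i j => M i j.rev

def rot90 {m n : ℕ} (M : Matrix (Fin m) (Fin n) Bool) : Matrix (Fin n) (Fin m) Bool :=
  fun i j => M j i.rev

/-- `M` avoids `P` together with its horizontal and vertical reflections. -/
def AvoidsRefl {a b m n : ℕ} (M : Matrix (Fin m) (Fin n) Bool)
    (P : Matrix (Fin a) (Fin b) Bool) : Prop :=
  Avoids M P ∧ Avoids M (rowRefl P) ∧ Avoids M (colRefl P) ∧ Avoids M (rowRefl (colRefl P))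

/-- `M` avoids `P` together with all of its reflections and rotations. -/
def AvoidsD8 {a b m n : ℕ} (M : Matrix (Fin m) (Fin n) Bool)
    (P : Matrix (Fin a) (Fin b) Bool) : Prop :=
  AvoidsRefl M P ∧ AvoidsRefl M (rot90 P)

def S1 : Matrix (Fin 2) (Fin 4) Bool :=
  !![true, false, true, false; false, true, false, true]

def Q1 : Matrix (Fin 2) (Fin 3) Bool :=
  !![true, false, true; true, true, false]

def Q3 : Matrix (Fin 3) (Fin 3) Bool :=
  !![true, false, true; false, true, false; false, false, true]

def S2 : Matrix (Fin 3) (Fin 4) Bool :=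
  !![true, false, false, false; false, false, true, false; false, true, false, true]

def Rpat : Matrix (Fin 2) (Fin 2) Bool := !![true, true; true, true]

/-- Row `r` encompasses row `s`: `r` has a one strictly left of the leftmost one of `s`
and a one strictly right of the rightmost one of `s`. -/
def Encompasses {m n : ℕ} (M : Matrix (Fin m) (Fin n) Bool) (r s : Fin m) : Prop :=
  (∃ c : Fin n, M r c = true ∧ ∀ c', M s c' = true → c < c') ∧
  (∃ c : Fin n, M r c = true ∧ ∀ c', M s c' = true → c' < c)

noncomputable def rowOnes {m n : ℕ} (M : Matrix (Fin m) (Fin n) Bool) (r : Fin m) : ℕ :=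
  (Finset.univ.filter (fun j : Fin n => M r j = true)).card
/-- A 0-1 matrix is potentially mnl (conditions (1)–(4) of the paper). -/
def PotentiallyMnl {m n : ℕ} (P : Matrix (Fin m) (Fin n) Bool) : Prop :=
  AvoidsRefl P S1 ∧ AvoidsRefl P Q1 ∧ AvoidsRefl P Rpat ∧
  (¬ ∃ (i : Fin m) (j : ℕ) (h1 : 0 < j) (h2 : j + 1 < n),
      P i ⟨j, by omega⟩ = true ∧ (∀ i', P i' ⟨j, by omega⟩ = true → i' = i) ∧
      P i ⟨j - 1, by omega⟩ = true ∧ P i ⟨j + 1, h2⟩ = true) ∧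
  (¬ ∃ (hn : 1 < n) (i : Fin m),
      P i ⟨0, by omega⟩ = true ∧ (∀ i', P i' ⟨0, by omega⟩ = true → i' = i) ∧
      P i ⟨1, hn⟩ = true) ∧
  (¬ ∃ (hn : 1 < n) (i : Fin m),
      P i ⟨n - 1, by omega⟩ = true ∧ (∀ i', P i' ⟨n - 1, by omega⟩ = true → i' = i) ∧
      P i ⟨n - 2, by omega⟩ = true) ∧
  (∀ j : Fin n, ∃ i : Fin m, P i j = true)

-- ### auxiliary lemmas ###

lemma sm2 {m : ℕ} {x y : Fin m} (h : x < y) : StrictMono ![x, y] := by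
  intro a b hab
  fin_cases a <;> fin_cases b <;> simp_all

lemma sm3 {m : ℕ} {x y z : Fin m} (h1 : x < y) (h2 : y < z) : StrictMono ![x, y, z] := by
  have h3 : x < z := h1.trans h2
  intro a b hab
  fin_cases a <;> fin_cases b <;> simp_all

lemma sm4 {m : ℕ} {x y z w : Fin m} (h1 : x < y) (h2 : y < z) (h3 : z < w) :
    StrictMono ![x, y, z, w] := by
  have h4 : x < z := h1.trans h2
  have h5 : y < w := h2.trans h3
  have h6 : x < w := h1.trans h5
  intro a b hab
  fin_cases a <;> fin_cases b <;> simp_all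

section Pairs
variable {k n : ℕ} {P : Matrix (Fin k) (Fin n) Bool}

lemma altRule (hS : AvoidsRefl P S1) {r s : Fin k} (hrs : r ≠ s) {c1 c2 c3 c4 : Fin n}
    (h12 : c1 < c2) (h23 : c2 < c3) (h34 : c3 < c4)
    (h1 : P r c1 = true) (h2 : P s c2 = true) (h3 : P r c3 = true) (h4 : P s c4 = true) :
    False := by
  rcases lt_or_gt_of_ne hrs with h | h
  · exact hS.1 ⟨![r, s], ![c1, c2, c3, c4], sm2 h, sm4 h12 h23 h34, by
      intro i j hij; fin_cases i <;> fin_cases j <;> simp_all [S1]⟩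
  · have e : rowRefl S1 = !![false, true, false, true; true, false, true, false] := by decide
    exact hS.2.1 ⟨![s, r], ![c1, c2, c3, c4], sm2 h, sm4 h12 h23 h34, by
      rw [e]; intro i j hij; fin_cases i <;> fin_cases j <;> simp_all⟩

lemma sharedRight (hQ : AvoidsRefl P Q1) (hR : AvoidsRefl P Rpat) {r s : Fin k} (hrs : r ≠ s)
    {c x y : Fin n} (hcx : c < x) (hcy : c < y)
    (h1 : P r c = true) (h2 : P r x = true) (h3 : P s c = true) (h4 : P s y = true) :
    False := by
  have eQr : rowRefl Q1 = !![true, true, false; true, false, true] := by decide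
  rcases lt_trichotomy x y with hxy | hxy | hxy
  · rcases lt_or_gt_of_ne hrs with h | h
    · exact hQ.2.1 ⟨![r, s], ![c, x, y], sm2 h, sm3 hcx hxy, by
        rw [eQr]; intro i j hij; fin_cases i <;> fin_cases j <;> simp_all⟩
    · exact hQ.1 ⟨![s, r], ![c, x, y], sm2 h, sm3 hcx hxy, by
        intro i j hij; fin_cases i <;> fin_cases j <;> simp_all [Q1]⟩
  · subst hxy
    rcases lt_or_gt_of_ne hrs with h | h
    · exact hR.1 ⟨![r, s], ![c, x], sm2 h, sm2 hcx, by
        intro i j hij; fin_cases i <;> fin_cases j <;> simp_all [Rpat]⟩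
    · exact hR.1 ⟨![s, r], ![c, x], sm2 h, sm2 hcx, by
        intro i j hij; fin_cases i <;> fin_cases j <;> simp_all [Rpat]⟩
  · rcases lt_or_gt_of_ne hrs with h | h
    · exact hQ.1 ⟨![r, s], ![c, y, x], sm2 h, sm3 hcy hxy, by
        intro i j hij; fin_cases i <;> fin_cases j <;> simp_all [Q1]⟩
    · exact hQ.2.1 ⟨![s, r], ![c, y, x], sm2 h, sm3 hcy hxy, by
        rw [eQr]; intro i j hij; fin_cases i <;> fin_cases j <;> simp_all⟩

lemma sharedLeft (hQ : AvoidsRefl P Q1) (hR : AvoidsRefl P Rpat) {r s : Fin k} (hrs : r ≠ s)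
    {c x y : Fin n} (hcx : x < c) (hcy : y < c)
    (h1 : P r c = true) (h2 : P r x = true) (h3 : P s c = true) (h4 : P s y = true) :
    False := by
  have eQc : colRefl Q1 = !![true, false, true; false, true, true] := by decide
  have eQrc : rowRefl (colRefl Q1) = !![false, true, true; true, false, true] := by decide
  rcases lt_trichotomy x y with hxy | hxy | hxy
  · rcases lt_or_gt_of_ne hrs with h | h
    · exact hQ.2.2.1 ⟨![r, s], ![x, y, c], sm2 h, sm3 hxy hcy, by
        rw [eQc]; intro i j hij; fin_cases i <;> fin_cases j <;> simp_all⟩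
    · exact hQ.2.2.2 ⟨![s, r], ![x, y, c], sm2 h, sm3 hxy hcy, by
        rw [eQrc]; intro i j hij; fin_cases i <;> fin_cases j <;> simp_all⟩
  · subst hxy
    rcases lt_or_gt_of_ne hrs with h | h
    · exact hR.1 ⟨![r, s], ![x, c], sm2 h, sm2 hcx, by
        intro i j hij; fin_cases i <;> fin_cases j <;> simp_all [Rpat]⟩
    · exact hR.1 ⟨![s, r], ![x, c], sm2 h, sm2 hcx, by
        intro i j hij; fin_cases i <;> fin_cases j <;> simp_all [Rpat]⟩
  · rcases lt_or_gt_of_ne hrs with h | h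
    · exact hQ.2.2.2 ⟨![r, s], ![y, x, c], sm2 h, sm3 hxy hcx, by
        rw [eQrc]; intro i j hij; fin_cases i <;> fin_cases j <;> simp_all⟩
    · exact hQ.2.2.1 ⟨![s, r], ![y, x, c], sm2 h, sm3 hxy hcx, by
        rw [eQc]; intro i j hij; fin_cases i <;> fin_cases j <;> simp_all⟩

end Pairs

section Count
variable {k n : ℕ} (P : Matrix (Fin k) (Fin n) Bool)

def pb (i : Fin k) (j : ℕ) : Bool := if h : j < n then P i ⟨j, h⟩ else false

lemma pb_lt {P : Matrix (Fin k) (Fin n) Bool} {i : Fin k} {j : ℕ} (h : pb P i j = true) :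
    j < n := by
  by_contra hn
  simp [pb, hn] at h

lemma pb_eq {P : Matrix (Fin k) (Fin n) Bool} {i : Fin k} {j : ℕ} (h : j < n) :
    pb P i j = P i ⟨j, h⟩ := dif_pos h

lemma pb_of {P : Matrix (Fin k) (Fin n) Bool} {i : Fin k} (c : Fin n) (h : P i c = true) :
    pb P i (c : ℕ) = true := by
  rw [pb_eq c.isLt]; simpa using h

lemma pb_to {P : Matrix (Fin k) (Fin n) Bool} {i : Fin k} {j : ℕ} (h : pb P i j = true) :
    P i ⟨j, pb_lt h⟩ = true := by
  rwa [pb_eq (pb_lt h)] at h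

def onesIn (lo hi : ℕ) : ℕ :=
  (Finset.univ.filter (fun p : Fin k × Fin n =>
    P p.1 p.2 = true ∧ lo ≤ (p.2 : ℕ) ∧ (p.2 : ℕ) < hi)).card

def Tset (j : ℕ) : Finset (Fin k) := Finset.univ.filter (fun i => pb P i j = true)

def Nset (lo hi : ℕ) : Finset (Fin k) :=
  Finset.univ.filter (fun i => ∃ j ∈ Finset.Ico lo hi, pb P i j = true)

lemma onesIn_split (lo mid hi : ℕ) (h1 : lo ≤ mid) (h2 : mid ≤ hi) :
    onesIn P lo hi = onesIn P lo mid + onesIn P mid hi := by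
  rw [onesIn, onesIn, onesIn, ← Finset.card_union_of_disjoint]
  · congr 1
    ext p
    simp only [Finset.mem_union, Finset.mem_filter, Finset.mem_univ, true_and]
    constructor
    · rintro ⟨hp, hl, hr⟩
      rcases lt_or_ge (p.2 : ℕ) mid with h | h
      · exact Or.inl ⟨hp, hl, h⟩
      · exact Or.inr ⟨hp, h, hr⟩
    · rintro (⟨hp, hl, hr⟩ | ⟨hp, hl, hr⟩) <;> exact ⟨hp, by omega, by omega⟩
  · rw [Finset.disjoint_left]
    intro p hp1 hp2
    simp only [Finset.mem_filter, Finset.mem_univ, true_and] at hp1 hp2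
    omega

lemma onesIn_width1 (lo : ℕ) : onesIn P lo (lo + 1) = (Tset P lo).card := by
  rw [onesIn, Tset]
  refine Finset.card_bij' (fun p _ => p.1)
    (fun r hr => (r, ⟨lo, pb_lt (by simpa [Finset.mem_filter] using hr : pb P r lo = true)⟩))
    ?_ ?_ ?_ ?_
  · rintro ⟨i, c⟩ hp
    simp only [Finset.mem_filter, Finset.mem_univ, true_and] at hp ⊢
    have hc : (c : ℕ) = lo := by omega
    have := pb_of c hp.1
    rwa [hc] at this
  · intro r hr
    simp only [Finset.mem_filter, Finset.mem_univ, true_and] at hr ⊢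
    refine ⟨?_, le_refl _, by omega⟩
    rwa [pb_eq] at hr
  · rintro ⟨i, c⟩ hp
    simp only [Finset.mem_filter, Finset.mem_univ, true_and] at hp
    have hc : (c : ℕ) = lo := by omega
    exact Prod.ext rfl (Fin.ext hc.symm)
  · intro r hr; rfl

lemma Tset_subset_Nset {lo hi j : ℕ} (h1 : lo ≤ j) (h2 : j < hi) :
    Tset P j ⊆ Nset P lo hi := by
  intro i hi'
  simp only [Tset, Nset, Finset.mem_filter, Finset.mem_univ, true_and, Finset.mem_Ico] at *
  exact ⟨j, ⟨h1, h2⟩, hi'⟩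

def CondI (j : ℕ) : Prop :=
  ∀ i : Fin k, pb P i j = true → (∀ i', pb P i' j = true → i' = i) →
    pb P i (j - 1) = true → pb P i (j + 1) = true → False

def CondL (lo : ℕ) : Prop :=
  ∀ i : Fin k, pb P i lo = true → (∀ i', pb P i' lo = true → i' = i) →
    pb P i (lo + 1) = true → False

def CondR (hi : ℕ) : Prop :=
  ∀ i : Fin k, pb P i (hi - 1) = true → (∀ i', pb P i' (hi - 1) = true → i' = i) →
    pb P i (hi - 2) = true → False

end Count

section MainInd
variable {k n : ℕ} {P : Matrix (Fin k) (Fin n) Bool}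

lemma mainInd (hS : AvoidsRefl P S1) (hQ : AvoidsRefl P Q1) (hR : AvoidsRefl P Rpat) :
    ∀ N lo hi, hi - lo ≤ N → hi ≤ n → lo + 2 ≤ hi →
    (∀ j, lo ≤ j → j < hi → ∃ i, pb P i j = true) →
    (∀ j, lo < j → j + 1 < hi → CondI P j) →
    ∀ bL bR : ℕ, bL ≤ 1 → bR ≤ 1 → (bL = 1 → CondL P lo) → (bR = 1 → CondR P hi) →
    onesIn P lo hi + 2 + bL + bR ≤ 4 * (Nset P lo hi).card := by
  intro N
  induction N with
  | zero => intro lo hi h1 _ h3; omega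
  | succ N IH =>
    intro lo hi hN hhn hlo H4 H2 bL bR hbL hbR hCL hCR
    -- helper facts
    have tpos : ∀ j, lo ≤ j → j < hi → 1 ≤ (Tset P j).card := by
      intro j h1 h2
      obtain ⟨i, hi'⟩ := H4 j h1 h2
      exact Finset.card_pos.mpr ⟨i, by simp [Tset, hi']⟩
    by_cases hw : hi = lo + 2
    · -- base case: width exactly 2
      subst hw
      have e1 : onesIn P lo (lo + 2) = (Tset P lo).card + (Tset P (lo + 1)).card := by
        have e2 := onesIn_width1 P (lo + 1)
        rw [show lo + 1 + 1 = lo + 2 by omega] at e2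
        rw [onesIn_split P lo (lo + 1) (lo + 2) (by omega) (by omega), onesIn_width1, e2]
      have ht0 := tpos lo (by omega) (by omega)
      have ht1 := tpos (lo + 1) (by omega) (by omega)
      have hs0 : (Tset P lo).card ≤ (Nset P lo (lo + 2)).card :=
        Finset.card_le_card (Tset_subset_Nset P (by omega) (by omega))
      have hs1 : (Tset P (lo + 1)).card ≤ (Nset P lo (lo + 2)).card :=
        Finset.card_le_card (Tset_subset_Nset P (by omega) (by omega))
      by_cases hK : 2 ≤ (Nset P lo (lo + 2)).card
      · omega
      · -- K = 1 : a single row; boundary conditions must fail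
        have hK1 : (Nset P lo (lo + 2)).card = 1 := by omega
        have ht0e : (Tset P lo).card = 1 := by omega
        have ht1e : (Tset P (lo + 1)).card = 1 := by omega
        obtain ⟨r0, hr0⟩ := Finset.card_eq_one.mp ht0e
        obtain ⟨r1, hr1⟩ := Finset.card_eq_one.mp ht1e
        have hpb0 : pb P r0 lo = true := by
          have : r0 ∈ Tset P lo := by rw [hr0]; exact Finset.mem_singleton_self r0
          simpa [Tset] using this
        have hpb1 : pb P r1 (lo + 1) = true := by
          have : r1 ∈ Tset P (lo + 1) := by rw [hr1]; exact Finset.mem_singleton_self r1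
          simpa [Tset] using this
        have hr01 : r0 = r1 := by
          obtain ⟨w, hw'⟩ := Finset.card_eq_one.mp hK1
          have h0 : r0 ∈ Nset P lo (lo + 2) :=
            Tset_subset_Nset (P := P) (lo := lo) (hi := lo + 2) (j := lo) (le_refl lo)
              (by omega) (by rw [hr0]; exact Finset.mem_singleton_self r0)
          have h1 : r1 ∈ Nset P lo (lo + 2) :=
            Tset_subset_Nset (P := P) (lo := lo) (hi := lo + 2) (j := lo + 1) (by omega)
              (by omega) (by rw [hr1]; exact Finset.mem_singleton_self r1)
          rw [hw', Finset.mem_singleton] at h0 h1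
          rw [h0, h1]
        have hbL0 : bL = 0 := by
          by_contra h
          have hbL1 : bL = 1 := by omega
          refine hCL hbL1 r0 hpb0 ?_ (by rw [hr01]; exact hpb1)
          intro i' h'
          have : i' ∈ Tset P lo := by simp [Tset, h']
          rw [hr0] at this; simpa using this
        have hbR0 : bR = 0 := by
          by_contra h
          have hbR1 : bR = 1 := by omega
          have e2 : lo + 2 - 1 = lo + 1 := by omega
          have e3 : lo + 2 - 2 = lo := by omega
          have := hCR hbR1 r1
          rw [e2, e3] at this
          refine this hpb1 ?_ (by rw [← hr01]; exact hpb0)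
          intro i' h'
          have : i' ∈ Tset P (lo + 1) := by simp [Tset, h']
          rw [hr1] at this; simpa using this
        omega
    · -- width at least 3
      have hw3 : lo + 3 ≤ hi := by omega
      have hsplit : onesIn P lo hi = onesIn P lo (hi - 1) + (Tset P (hi - 1)).card := by
        have e := onesIn_width1 P (hi - 1)
        rw [show hi - 1 + 1 = hi by omega] at e
        rw [onesIn_split P lo (hi - 1) hi (by omega) (by omega), e]
      have hNun : Nset P lo hi = Nset P lo (hi - 1) ∪ Tset P (hi - 1) := by
        ext i
        simp only [Nset, Tset, Finset.mem_union, Finset.mem_filter, Finset.mem_univ, true_and,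
          Finset.mem_Ico]
        constructor
        · rintro ⟨j, ⟨hj1, hj2⟩, hp⟩
          rcases eq_or_lt_of_le (Nat.lt_succ_iff.mp (by omega : j < (hi - 1) + 1)) with h | h
          · right; rw [← h]; exact hp
          · left; exact ⟨j, ⟨hj1, h⟩, hp⟩
        · rintro (⟨j, ⟨hj1, hj2⟩, hp⟩ | hp)
          · exact ⟨j, ⟨hj1, by omega⟩, hp⟩
          · exact ⟨hi - 1, ⟨by omega, by omega⟩, hp⟩
      have ht1 := tpos (hi - 1) (by omega) (by omega)
      rcases eq_or_lt_of_le ht1 with ht | ht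
      · -- t = 1 : unique row r at last column
        obtain ⟨r, hrT⟩ := Finset.card_eq_one.mp ht.symm
        have hr1 : pb P r (hi - 1) = true := by
          have : r ∈ Tset P (hi - 1) := by rw [hrT]; exact Finset.mem_singleton_self r
          simpa [Tset] using this
        have huniq : ∀ i', pb P i' (hi - 1) = true → i' = r := by
          intro i' h'
          have : i' ∈ Tset P (hi - 1) := by simp [Tset, h']
          rw [hrT] at this; simpa using this
        by_cases hex : ∃ j ∈ Finset.Ico lo (hi - 1), pb P r j = true
        · -- r has other ones in the interval
          set F := (Finset.Ico lo (hi - 1)).filter (fun j => pb P r j = true) with hF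
          have hFne : F.Nonempty := by
            obtain ⟨j, hj, hp⟩ := hex
            exact ⟨j, by simp [hF, Finset.mem_filter, hj, hp]⟩
          set a := F.max' hFne with haDef
          have haF : a ∈ F := F.max'_mem hFne
          have haIco : lo ≤ a ∧ a < hi - 1 := by
            have := (Finset.mem_filter.mp haF).1
            simpa [Finset.mem_Ico] using this
          have hpa : pb P r a = true := (Finset.mem_filter.mp haF).2
          have hmax : ∀ j, lo ≤ j → j < hi - 1 → pb P r j = true → j ≤ a := by
            intro j h1 h2 h3
            exact F.le_max' j (by simp [hF, Finset.mem_filter, Finset.mem_Ico, h1, h2, h3])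
          by_cases hae : a = hi - 2
          · -- case B-b1
            have hbR0 : bR = 0 := by
              by_contra h
              have hbR1 : bR = 1 := by omega
              exact hCR hbR1 r hr1 huniq (by rw [← hae]; exact hpa)
            have hCR' : CondR P (hi - 1) := by
              intro i h1 h2 h3
              rw [show hi - 1 - 1 = hi - 2 by omega] at h1 h2
              rw [show hi - 1 - 2 = hi - 3 by omega] at h3
              have hir : i = r := (h2 r (by rw [← hae]; exact hpa)).symm
              subst hir
              refine H2 (hi - 2) (by omega) (by omega) i h1 h2 ?_ ?_
              · rw [show hi - 2 - 1 = hi - 3 by omega]; exact h3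
              · rw [show hi - 2 + 1 = hi - 1 by omega]; exact hr1
            have hNeq : Nset P lo hi = Nset P lo (hi - 1) := by
              rw [hNun, hrT]
              apply Finset.union_eq_left.mpr
              apply Finset.singleton_subset_iff.mpr
              simp only [Nset, Finset.mem_filter, Finset.mem_univ, true_and]
              exact ⟨a, Finset.mem_Ico.mpr ⟨haIco.1, haIco.2⟩, hpa⟩
            have hKeq : (Nset P lo hi).card = (Nset P lo (hi - 1)).card := by rw [hNeq]
            have hIH := IH lo (hi - 1) (by omega) (by omega) (by omega)
              (fun j h1 h2 => H4 j h1 (by omega))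
              (fun j h1 h2 => H2 j h1 (by omega))
              bL 1 hbL (le_refl 1) hCL (fun _ => hCR')
            omega
          · -- case B-b2
            have ha3 : a ≤ hi - 3 := by omega
            have han : a < n := pb_lt hpa
            have hn1 : hi - 1 < n := pb_lt hr1
            have hdich : ∀ s : Fin k, ∀ x, a < x → x < hi - 1 → pb P s x = true →
                ∀ y, pb P s y = true → a < y ∧ y < hi - 1 := by
              intro s x hx1 hx2 hpx y hpy
              have hsr : s ≠ r := by
                rintro rfl
                have := hmax x (by omega) hx2 hpx
                omega
              by_contra hcon
              have hxn : x < n := pb_lt hpx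
              have hyn : y < n := pb_lt hpy
              rcases (by omega : y = a ∨ y < a ∨ y = hi - 1 ∨ hi - 1 < y) with hy | hy | hy | hy
              · rw [hy] at hpy
                exact sharedRight hQ hR (Ne.symm hsr) (c := ⟨a, han⟩) (x := ⟨hi - 1, hn1⟩)
                  (y := ⟨x, hxn⟩) (Fin.mk_lt_mk.mpr (by omega)) (Fin.mk_lt_mk.mpr (by omega))
                  (pb_to hpa) (pb_to hr1) (pb_to hpy) (pb_to hpx)
              · exact altRule hS hsr (c1 := ⟨y, hyn⟩) (c2 := ⟨a, han⟩) (c3 := ⟨x, hxn⟩)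
                  (c4 := ⟨hi - 1, hn1⟩) (Fin.mk_lt_mk.mpr (by omega))
                  (Fin.mk_lt_mk.mpr (by omega)) (Fin.mk_lt_mk.mpr (by omega))
                  (pb_to hpy) (pb_to hpa) (pb_to hpx) (pb_to hr1)
              · exact hsr (huniq s (hy ▸ hpy))
              · exact altRule hS (Ne.symm hsr) (c1 := ⟨a, han⟩) (c2 := ⟨x, hxn⟩)
                  (c3 := ⟨hi - 1, hn1⟩) (c4 := ⟨y, hyn⟩) (Fin.mk_lt_mk.mpr (by omega))
                  (Fin.mk_lt_mk.mpr (by omega)) (Fin.mk_lt_mk.mpr (by omega))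
                  (pb_to hpa) (pb_to hpx) (pb_to hr1) (pb_to hpy)
            have hones : onesIn P lo hi
                = onesIn P lo (a + 1) + onesIn P (a + 1) (hi - 1) + 1 := by
              have e1 := onesIn_split P lo (a + 1) hi (by omega) (by omega)
              have e2 := onesIn_split P (a + 1) (hi - 1) hi (by omega) (by omega)
              have e3 := onesIn_width1 P (hi - 1)
              rw [show hi - 1 + 1 = hi by omega] at e3
              rw [e1, e2, e3, ← ht]
              omega
            have hNun2 : Nset P lo hi = Nset P lo (a + 1) ∪ Nset P (a + 1) (hi - 1) := by
              ext i
              simp only [Nset, Finset.mem_union, Finset.mem_filter, Finset.mem_univ, true_and,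
                Finset.mem_Ico]
              constructor
              · rintro ⟨j, ⟨hj1, hj2⟩, hp⟩
                rcases le_or_gt j a with h | h
                · exact Or.inl ⟨j, ⟨hj1, by omega⟩, hp⟩
                · rcases (by omega : j < hi - 1 ∨ j = hi - 1) with h' | h'
                  · exact Or.inr ⟨j, ⟨by omega, h'⟩, hp⟩
                  · have : i = r := huniq i (h' ▸ hp)
                    subst this
                    exact Or.inl ⟨a, ⟨haIco.1, by omega⟩, hpa⟩
              · rintro (⟨j, ⟨h1, h2⟩, hp⟩ | ⟨j, ⟨h1, h2⟩, hp⟩) <;>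
                  exact ⟨j, ⟨by omega, by omega⟩, hp⟩
            have hdisj : Disjoint (Nset P lo (a + 1)) (Nset P (a + 1) (hi - 1)) := by
              rw [Finset.disjoint_left]
              intro i h1 h2
              simp only [Nset, Finset.mem_filter, Finset.mem_univ, true_and,
                Finset.mem_Ico] at h1 h2
              obtain ⟨x, ⟨hx1, hx2⟩, hpx⟩ := h2
              obtain ⟨y, ⟨hy1, hy2⟩, hpy⟩ := h1
              have := hdich i x (by omega) hx2 hpx y hpy
              omega
            have hKeq : (Nset P lo hi).card
                = (Nset P lo (a + 1)).card + (Nset P (a + 1) (hi - 1)).card := by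
              rw [hNun2, Finset.card_union_of_disjoint hdisj]
            have hKL1 : 1 ≤ (Nset P lo (a + 1)).card := by
              apply Finset.card_pos.mpr
              refine ⟨r, ?_⟩
              simp only [Nset, Finset.mem_filter, Finset.mem_univ, true_and, Finset.mem_Ico]
              exact ⟨a, ⟨haIco.1, by omega⟩, hpa⟩
            have hd1 : 1 ≤ (Nset P (a + 1) (hi - 1)).card := by
              obtain ⟨i, hp⟩ := H4 (a + 1) (by omega) (by omega)
              apply Finset.card_pos.mpr
              refine ⟨i, ?_⟩
              simp only [Nset, Finset.mem_filter, Finset.mem_univ, true_and, Finset.mem_Ico]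
              exact ⟨a + 1, ⟨le_refl _, by omega⟩, hp⟩
            have hMfact : onesIn P (a + 1) (hi - 1) + 2
                  ≤ 4 * (Nset P (a + 1) (hi - 1)).card ∨
                onesIn P (a + 1) (hi - 1) ≤ (Nset P (a + 1) (hi - 1)).card := by
              rcases le_or_gt (a + 1 + 2) (hi - 1) with hM2 | hM2
              · left
                have hIHM := IH (a + 1) (hi - 1) (by omega) (by omega) hM2
                  (fun j h1 h2 => H4 j (by omega) (by omega))
                  (fun j h1 h2 => H2 j (by omega) (by omega))
                  0 0 (by omega) (by omega) (by intro h; omega) (by intro h; omega)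
                omega
              · right
                have e := onesIn_width1 P (a + 1)
                rw [show a + 1 + 1 = hi - 1 by omega] at e
                rw [e]
                exact Finset.card_le_card (Tset_subset_Nset P (le_refl _) (by omega))
            have hLfact : onesIn P lo (a + 1) + 2 + bL ≤ 4 * (Nset P lo (a + 1)).card ∨
                onesIn P lo (a + 1) ≤ (Nset P lo (a + 1)).card := by
              rcases le_or_gt (lo + 2) (a + 1) with hL2 | hL2
              · left
                have hIHL := IH lo (a + 1) (by omega) (by omega) hL2
                  (fun j h1 h2 => H4 j h1 (by omega))
                  (fun j h1 h2 => H2 j h1 (by omega))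
                  bL 0 hbL (by omega) hCL (by intro h; omega)
                omega
              · right
                have hal : a = lo := by omega
                have e := onesIn_width1 P lo
                rw [show lo + 1 = a + 1 by omega] at e
                rw [e]
                exact Finset.card_le_card (Tset_subset_Nset P (by omega) (by omega))
            rcases hLfact with hL | hL <;> rcases hMfact with hM | hM <;> omega
        · -- case B-a : r is alone in the interval
          have hrn : r ∉ Nset P lo (hi - 1) := by
            simp only [Nset, Finset.mem_filter, Finset.mem_univ, true_and]
            exact hex
          have hNeq : Nset P lo hi = insert r (Nset P lo (hi - 1)) := by
            rw [hNun, hrT]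
            ext i
            simp only [Finset.mem_union, Finset.mem_singleton, Finset.mem_insert]
            tauto
          have hKeq : (Nset P lo hi).card = (Nset P lo (hi - 1)).card + 1 := by
            rw [hNeq, Finset.card_insert_of_notMem hrn]
          have hIH := IH lo (hi - 1) (by omega) (by omega) (by omega)
            (fun j h1 h2 => H4 j h1 (by omega))
            (fun j h1 h2 => H2 j h1 (by omega))
            bL 0 hbL (by omega) hCL (by intro h; omega)
          omega
      · -- t ≥ 2
        have hint : ((Nset P lo (hi - 1)) ∩ Tset P (hi - 1)).card ≤ 1 := by
          rw [Finset.card_le_one]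
          intro a ha b hb
          by_contra hab
          simp only [Finset.mem_inter, Nset, Tset, Finset.mem_filter, Finset.mem_univ, true_and,
            Finset.mem_Ico] at ha hb
          obtain ⟨⟨ja, ⟨hja1, hja2⟩, hpa⟩, hta⟩ := ha
          obtain ⟨⟨jb, ⟨hjb1, hjb2⟩, hpb'⟩, htb⟩ := hb
          have hn1 : hi - 1 < n := pb_lt hta
          have hjan : ja < n := pb_lt hpa
          have hjbn : jb < n := pb_lt hpb'
          exact sharedLeft hQ hR hab (c := ⟨hi - 1, hn1⟩) (x := ⟨ja, hjan⟩) (y := ⟨jb, hjbn⟩)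
            (Fin.mk_lt_mk.mpr (by omega)) (Fin.mk_lt_mk.mpr (by omega))
            (pb_to hta) (pb_to hpa) (pb_to htb) (pb_to hpb')
        have hcard : (Nset P lo hi).card + ((Nset P lo (hi - 1)) ∩ Tset P (hi - 1)).card
            = (Nset P lo (hi - 1)).card + (Tset P (hi - 1)).card := by
          rw [hNun, Finset.card_union_add_card_inter]
        have hIH := IH lo (hi - 1) (by omega) (by omega) (by omega)
          (fun j h1 h2 => H4 j h1 (by omega))
          (fun j h1 h2 => H2 j h1 (by omega))
          bL 0 hbL (by omega) hCL (by intro h; omega)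
        omega

end MainInd


theorem stmt2 (k : ℕ) (hk : 2 ≤ k) (n : ℕ) (P : Matrix (Fin k) (Fin n) Bool)
    (hP : PotentiallyMnl P) : onesCount P ≤ 4 * k - 4 := by
  obtain ⟨hS, hQ, hR, C2, C3L, C3R, C4⟩ := hP
  have hcount : onesCount P ≤ k * n := by
    refine le_trans (Finset.card_filter_le _ _) ?_
    simp [Finset.card_univ]
  rcases le_or_gt n 1 with hn | hn
  · have : k * n ≤ k := by nlinarith
    omega
  · -- n ≥ 2
    have H4 : ∀ j, 0 ≤ j → j < n → ∃ i, pb P i j = true := by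
      intro j _ h
      obtain ⟨i, hi⟩ := C4 ⟨j, h⟩
      exact ⟨i, by rw [pb_eq h]; exact hi⟩
    have H2 : ∀ j, 0 < j → j + 1 < n → CondI P j := by
      intro j h1 h2 i hpi hu hm hp
      apply C2
      refine ⟨i, j, h1, h2, ?_, ?_, ?_, ?_⟩
      · rw [pb_eq (by omega : j < n)] at hpi; exact hpi
      · intro i' h'
        exact hu i' (by rw [pb_eq (by omega : j < n)]; exact h')
      · rw [pb_eq (by omega : j - 1 < n)] at hm; exact hm
      · rw [pb_eq h2] at hp; exact hp
    have hCL : CondL P 0 := by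
      intro i h1 hu h2
      apply C3L
      refine ⟨hn, i, ?_, ?_, ?_⟩
      · rw [pb_eq (by omega : (0:ℕ) < n)] at h1; exact h1
      · intro i' h'
        exact hu i' (by rw [pb_eq (by omega : (0:ℕ) < n)]; exact h')
      · rw [pb_eq hn] at h2; exact h2
    have hCR : CondR P n := by
      intro i h1 hu h2
      apply C3R
      refine ⟨hn, i, ?_, ?_, ?_⟩
      · rw [pb_eq (by omega : n - 1 < n)] at h1; exact h1
      · intro i' h'
        exact hu i' (by rw [pb_eq (by omega : n - 1 < n)]; exact h')
      · rw [pb_eq (by omega : n - 2 < n)] at h2; exact h2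
    have hmain := mainInd hS hQ hR n 0 n (by omega) (le_refl n) (by omega) H4 H2
      1 1 (le_refl 1) (le_refl 1) (fun _ => hCL) (fun _ => hCR)
    have heq : onesCount P = onesIn P 0 n := by
      unfold onesCount onesIn
      congr 1
      apply Finset.filter_congr
      intro p _
      simp [p.2.isLt]
    have hK : (Nset P 0 n).card ≤ k := by
      refine le_trans (Finset.card_filter_le _ _) ?_
      simp [Finset.card_univ]
    omega
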